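/- Let X be the once-reinforced random walk on ℤ with parameter c > 0, M_n and m_n its running max and min. Then N_n = X_n^2 - n - 2((1-c)/(1+c)) Σ_{k<n} |X_k| 1_{X_k ∈ {m_k, M_k}} is a mean-zero martingale. -/

import Mathlib

/-!
A ±1 step gives `X_{n+1}^2 - X_n^2 = 2 X_n (2 𝟙{up} - 1) + 1`, so the conditional drift of
`X_n^2 - n` is `2 X_n (2 p_n - 1)`, where `p_n` is the conditional probability of an up-step.
Off the running extremes `p_n = 1/2`. At the maximum `X_n ≥ 0` (as `X_0 = 0`) and
`2 p_n - 1 = (1 - c)/(1 + c)`; at the minimum `X_n ≤ 0` and `2 p_n - 1 = -(1 - c)/(1 + c)`;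
at a point that is both, `X_n = 0`. In every case the drift is `2 (1 - c)/(1 + c) |X_n|`, which is
exactly the compensator. Since `|X_n| ≤ n`, every term is bounded, hence integrable.
-/

open MeasureTheory ProbabilityTheory

theorem Finset.measurable_range_inf'' {δ α : Type*} {mδ : MeasurableSpace δ} [MeasurableSpace α]
    [Lattice α] [MeasurableInf₂ α] {f : ℕ → δ → α} {n : ℕ} (hf : ∀ k ≤ n, Measurable (f k)) :
    Measurable fun x => (range (n + 1)).inf' nonempty_range_add_one fun k => f k x :=
  Finset.measurable_range_sup'' (α := αᵒᵈ) hf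

theorem abs_le_of_step_eq_add_one_or_sub_one {x : ℕ → ℤ} (h0 : x 0 = 0)
    (hstep : ∀ n, x (n + 1) = x n + 1 ∨ x (n + 1) = x n - 1) (n : ℕ) : |x n| ≤ n := by
  induction n with
  | zero => simp [h0]
  | succ n ih => rcases hstep n with h | h <;> rw [h, abs_le] at * <;> omega

theorem measurable_of_le_of_eq_iSup_comap {Ω β : Type*} [m0 : MeasurableSpace Ω]
    [MeasurableSpace β] {X : ℕ → Ω → β} {ℱ : Filtration ℕ m0}
    (hℱ : ∀ n, ℱ n = ⨆ k ∈ Set.Iic n, MeasurableSpace.comap (X k) inferInstance)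
    {k n : ℕ} (hkn : k ≤ n) : Measurable[ℱ n] (X k) := by
  rw [measurable_iff_comap_le, hℱ n]
  exact le_iSup₂ (f := fun k (_ : k ∈ Set.Iic n) => MeasurableSpace.comap (X k) inferInstance)
    k hkn

theorem condExp_mul_add_ae_eq {Ω : Type*} {m m0 : MeasurableSpace Ω} {μ : Measure Ω}
    (hm : m ≤ m0) [SigmaFinite (μ.trim hm)] {Y I Z : Ω → ℝ} (hY : StronglyMeasurable[m] Y)
    (hZ : StronglyMeasurable[m] Z)
    (hYI : Integrable (Y * I) μ) (hI : Integrable I μ) (hZi : Integrable Z μ) :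
    μ[Y * I + Z | m] =ᵐ[μ] Y * μ[I | m] + Z := by
  filter_upwards [condExp_add hYI hZi m, condExp_mul_of_stronglyMeasurable_left hY hYI hI]
    with ω hsum hprod
  rw [hsum, Pi.add_apply, hprod, condExp_of_stronglyMeasurable hm hZ hZi, Pi.add_apply]

namespace ORRW

noncomputable def upProb (c : ℝ) (x M m : ℤ) : ℝ :=
  if x = M ∧ x = m then 1/2 else if x = M then 1/(1+c) else if x = m then c/(1+c) else 1/2

noncomputable def boundaryAbs (x M m : ℤ) : ℝ := |(x : ℝ)| * if x = m ∨ x = M then 1 else 0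

theorem abs_boundaryAbs_le (x M m : ℤ) : |boundaryAbs x M m| ≤ |(x : ℝ)| := by
  unfold boundaryAbs; split_ifs <;> simp

theorem two_mul_mul_two_mul_upProb_sub_one {c : ℝ} (hc : 1 + c ≠ 0) {x M m : ℤ}
    (hM : x = M → 0 ≤ x) (hm : x = m → x ≤ 0) :
    2 * x * (2 * upProb c x M m - 1) = 2 * (1 - c) / (1 + c) * boundaryAbs x M m := by
  unfold upProb boundaryAbs
  by_cases hxM : x = M <;> by_cases hxm : x = m
  · simp [le_antisymm (hm hxm) (hM hxM)]
  · have hx : (0 : ℝ) ≤ x := by exact_mod_cast hM hxM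
    rw [if_neg (hxm ·.2), if_pos hxM, if_pos (.inr hxM), abs_of_nonneg hx]
    field_simp; ring
  · have hx : (x : ℝ) ≤ 0 := by exact_mod_cast hm hxm
    rw [if_neg (hxM ·.1), if_neg hxM, if_pos hxm, if_pos (.inl hxm), abs_of_nonpos hx]
    field_simp; ring
  · rw [if_neg (hxM ·.1), if_neg hxM, if_neg hxm, if_neg (·.elim hxm hxM)]
    ring

variable {Ω : Type*} {c : ℝ} {X M m : ℕ → Ω → ℤ}

noncomputable def squareProcess (c : ℝ) (X M m : ℕ → Ω → ℤ) (n : ℕ) (ω : Ω) : ℝ :=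
  (X n ω : ℝ) ^ 2 - n - 2 * (1 - c) / (1 + c) *
    ∑ k ∈ Finset.range n, boundaryAbs (X k ω) (M k ω) (m k ω)

def upSet (X : ℕ → Ω → ℤ) (n : ℕ) : Set Ω := {ω | X (n + 1) ω = X n ω + 1}

theorem squareProcess_zero (hX0 : ∀ ω, X 0 ω = 0) : squareProcess c X M m 0 = 0 := by
  ext ω; simp [squareProcess, hX0]

theorem squareProcess_succ_sub {n : ℕ}
    (hstep : ∀ ω, X (n + 1) ω = X n ω + 1 ∨ X (n + 1) ω = X n ω - 1) :
    squareProcess c X M m (n + 1) - squareProcess c X M m n =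
      (fun ω => 4 * (X n ω : ℝ)) * (upSet X n).indicator (fun _ => 1) +
        fun ω => -(2 * X n ω) - 2 * (1 - c) / (1 + c) * boundaryAbs (X n ω) (M n ω) (m n ω) := by
  ext ω
  simp only [squareProcess, Pi.sub_apply, Pi.add_apply, Pi.mul_apply, Finset.sum_range_succ,
    Nat.cast_succ]
  rcases hstep ω with h | h
  · rw [Set.indicator_of_mem (show ω ∈ upSet X n from h), h]; push_cast; ring
  · rw [Set.indicator_of_notMem (show ω ∉ upSet X n by simp [upSet, h]; omega), h]
    push_cast; ring

theorem measurable_boundaryAbs {_ : MeasurableSpace Ω} {f g h : Ω → ℤ} (hf : Measurable f)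
    (hg : Measurable g) (hh : Measurable h) : Measurable fun ω => boundaryAbs (f ω) (g ω) (h ω) :=
  (measurable_of_countable fun p : ℤ × ℤ × ℤ => boundaryAbs p.1 p.2.1 p.2.2).comp
    (hf.prodMk (hg.prodMk hh))

end ORRW

open ORRW

structure IsORRW {Ω : Type*} [m0 : MeasurableSpace Ω] (μ : Measure Ω) (c : ℝ)
    (X M m : ℕ → Ω → ℤ) (ℱ : Filtration ℕ m0) : Prop where
  zero : ∀ ω, X 0 ω = 0
  step : ∀ n ω, X (n + 1) ω = X n ω + 1 ∨ X (n + 1) ω = X n ω - 1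
  max_eq : ∀ n ω, M n ω = (Finset.range (n + 1)).sup' Finset.nonempty_range_add_one (X · ω)
  min_eq : ∀ n ω, m n ω = (Finset.range (n + 1)).inf' Finset.nonempty_range_add_one (X · ω)
  filtration_eq : ∀ n, ℱ n = ⨆ k ∈ Set.Iic n, MeasurableSpace.comap (X k) inferInstance
  condExp_indicator_upSet : ∀ n, μ[(upSet X n).indicator (fun _ => 1) | ℱ n]
    =ᵐ[μ] fun ω => upProb c (X n ω) (M n ω) (m n ω)

namespace IsORRW

variable {Ω : Type*} [m0 : MeasurableSpace Ω] {μ : Measure Ω} {c : ℝ} {X M m : ℕ → Ω → ℤ}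
  {ℱ : Filtration ℕ m0} (h : IsORRW μ c X M m ℱ)
include h

theorem abs_walk_le (n : ℕ) (ω : Ω) : |(X n ω : ℝ)| ≤ n := by
  exact_mod_cast abs_le_of_step_eq_add_one_or_sub_one (x := (X · ω)) (h.zero ω) (h.step · ω) n

theorem nonneg_of_eq_max {n : ℕ} {ω : Ω} (hx : X n ω = M n ω) : 0 ≤ X n ω :=
  h.zero ω ▸ hx ▸ h.max_eq n ω ▸ Finset.le_sup' (X · ω) (Finset.mem_range.2 n.succ_pos)

theorem nonpos_of_eq_min {n : ℕ} {ω : Ω} (hx : X n ω = m n ω) : X n ω ≤ 0 :=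
  h.zero ω ▸ hx ▸ h.min_eq n ω ▸ Finset.inf'_le (X · ω) (Finset.mem_range.2 n.succ_pos)

theorem measurable_walk {k n : ℕ} (hkn : k ≤ n) : Measurable[ℱ n] (X k) :=
  measurable_of_le_of_eq_iSup_comap h.filtration_eq hkn

theorem measurable (n : ℕ) : Measurable (X n) :=
  (h.measurable_walk le_rfl).mono (ℱ.le n) le_rfl

theorem measurable_max {k n : ℕ} (hkn : k ≤ n) : Measurable[ℱ n] (M k) :=
  -- the domain's measurable space is an anonymous instance argument there, hence the `@`
  funext (h.max_eq k) ▸ @Finset.measurable_range_sup'' _ _ _ (ℱ n) _ _ _ _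
    fun _ hj => h.measurable_walk (hj.trans hkn)

theorem measurable_min {k n : ℕ} (hkn : k ≤ n) : Measurable[ℱ n] (m k) :=
  funext (h.min_eq k) ▸ Finset.measurable_range_inf'' (mδ := ℱ n)
    fun _ hj => h.measurable_walk (hj.trans hkn)

theorem measurable_boundaryAbs {k n : ℕ} (hkn : k ≤ n) :
    Measurable[ℱ n] fun ω => boundaryAbs (X k ω) (M k ω) (m k ω) :=
  ORRW.measurable_boundaryAbs (h.measurable_walk hkn) (h.measurable_max hkn) (h.measurable_min hkn)

theorem stronglyAdapted_squareProcess : StronglyAdapted ℱ (squareProcess c X M m) := fun n => by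
  have hsq : Measurable[ℱ n] fun ω => (X n ω : ℝ) ^ 2 :=
    (measurable_of_countable fun x : ℤ => (x : ℝ) ^ 2).comp (h.measurable_walk le_rfl)
  have hsum : Measurable[ℱ n] fun ω => ∑ k ∈ Finset.range n, boundaryAbs (X k ω) (M k ω) (m k ω) :=
    Finset.measurable_sum _ fun _ hk => h.measurable_boundaryAbs (Finset.mem_range.1 hk).le
  exact ((hsq.sub_const _).sub (hsum.const_mul _)).stronglyMeasurable

variable [IsFiniteMeasure μ]

theorem integrable_walk (n : ℕ) : Integrable (fun ω => (X n ω : ℝ)) μ :=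
  .of_bound ((measurable_of_countable _).comp (h.measurable n)).aestronglyMeasurable n
    (ae_of_all _ (h.abs_walk_le n))

theorem integrable_boundaryAbs (n : ℕ) :
    Integrable (fun ω => boundaryAbs (X n ω) (M n ω) (m n ω)) μ :=
  .of_bound ((h.measurable_boundaryAbs le_rfl).mono (ℱ.le n) le_rfl).aestronglyMeasurable n
    (ae_of_all _ fun ω => (abs_boundaryAbs_le _ _ _).trans (h.abs_walk_le n ω))

theorem integrable_squareProcess (n : ℕ) : Integrable (squareProcess c X M m n) μ := by
  have hsq : Integrable (fun ω => (X n ω : ℝ) ^ 2) μ :=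
    .of_bound ((h.integrable_walk n).aestronglyMeasurable.pow 2) (n ^ 2) <| ae_of_all _ fun ω => by
      simpa only [norm_pow, Real.norm_eq_abs] using
        pow_le_pow_left₀ (abs_nonneg _) (h.abs_walk_le n ω) 2
  exact (hsq.sub (integrable_const _)).sub
    ((integrable_finsetSum _ fun k _ => h.integrable_boundaryAbs k).const_mul _)

theorem condExp_squareProcess_succ_sub (hc : 1 + c ≠ 0) (n : ℕ) :
    μ[squareProcess c X M m (n + 1) - squareProcess c X M m n | ℱ n] =ᵐ[μ] 0 := by
  have hY : Measurable[ℱ n] fun ω => 4 * (X n ω : ℝ) :=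
    (measurable_of_countable fun x : ℤ => 4 * (x : ℝ)).comp (h.measurable_walk le_rfl)
  have hZ : Measurable[ℱ n] fun ω =>
      -(2 * (X n ω : ℝ)) - 2 * (1 - c) / (1 + c) * boundaryAbs (X n ω) (M n ω) (m n ω) :=
    ((measurable_of_countable fun x : ℤ => -(2 * (x : ℝ))).comp (h.measurable_walk le_rfl)).sub
      ((h.measurable_boundaryAbs le_rfl).const_mul _)
  have hup : MeasurableSet (upSet X n) :=
    measurableSet_eq_fun (h.measurable (n + 1)) ((h.measurable n).add_const 1)
  have hI : Integrable ((upSet X n).indicator fun _ => (1 : ℝ)) μ :=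
    (integrable_const 1).indicator hup
  have hYI : Integrable ((fun ω => 4 * (X n ω : ℝ)) * (upSet X n).indicator fun _ => 1) μ :=
    hI.bdd_mul (hY.mono (ℱ.le n) le_rfl).aestronglyMeasurable (c := 4 * n) <|
      ae_of_all _ fun ω => by
        simpa only [norm_mul, Real.norm_eq_abs, Nat.abs_ofNat] using
          mul_le_mul_of_nonneg_left (h.abs_walk_le n ω) zero_le_four
  have hZI : Integrable (fun ω =>
      -(2 * (X n ω : ℝ)) - 2 * (1 - c) / (1 + c) * boundaryAbs (X n ω) (M n ω) (m n ω)) μ :=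
    ((h.integrable_walk n).const_mul 2).neg.sub ((h.integrable_boundaryAbs n).const_mul _)
  rw [squareProcess_succ_sub (h.step n)]
  filter_upwards [condExp_mul_add_ae_eq (ℱ.le n) hY.stronglyMeasurable hZ.stronglyMeasurable
    hYI hI hZI, h.condExp_indicator_upSet n] with ω hω hp
  have hdrift := two_mul_mul_two_mul_upProb_sub_one hc (h.nonneg_of_eq_max (n := n) (ω := ω))
    (h.nonpos_of_eq_min (n := n) (ω := ω))
  rw [hω, Pi.add_apply, Pi.mul_apply, hp, Pi.zero_apply]
  linarith

theorem martingale_squareProcess (hc : 1 + c ≠ 0) : Martingale (squareProcess c X M m) ℱ μ :=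
  martingale_of_condExp_sub_eq_zero_nat h.stronglyAdapted_squareProcess h.integrable_squareProcess
    (h.condExp_squareProcess_succ_sub hc)

theorem integral_squareProcess (hc : 1 + c ≠ 0) (n : ℕ) :
    ∫ ω, squareProcess c X M m n ω ∂μ = 0 := by
  rw [← setIntegral_univ, ← (h.martingale_squareProcess hc).setIntegral_eq n.zero_le
    MeasurableSet.univ, squareProcess_zero h.zero]
  simp

end IsORRW

theorem orrw_square_martingale_general {Ω : Type*} [m0 : MeasurableSpace Ω]
    (μ : Measure Ω) [IsProbabilityMeasure μ]
    (c : ℝ) (hc : 0 < c)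
    (X : ℕ → Ω → ℤ)
    (hX0 : ∀ ω, X 0 ω = 0)
    (hstep : ∀ n ω, X (n+1) ω = X n ω + 1 ∨ X (n+1) ω = X n ω - 1)
    (M : ℕ → Ω → ℤ)
    (hM : ∀ n ω, M n ω = (Finset.range (n+1)).sup' Finset.nonempty_range_add_one
      (fun k => X k ω))
    (m : ℕ → Ω → ℤ)
    (hm : ∀ n ω, m n ω = (Finset.range (n+1)).inf' Finset.nonempty_range_add_one
      (fun k => X k ω))
    (ℱ : Filtration ℕ m0)
    (hℱ : ∀ n, ℱ n = ⨆ k ∈ Set.Iic n, MeasurableSpace.comap (X k) inferInstance)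
    (hcond : ∀ n,
      (μ[Set.indicator {ω | X (n+1) ω = X n ω + 1} (fun _ => (1 : ℝ)) | ℱ n])
        =ᵐ[μ] fun ω =>
          if X n ω = M n ω ∧ X n ω = m n ω then 1/2
          else if X n ω = M n ω then 1/(1+c)
          else if X n ω = m n ω then c/(1+c)
          else 1/2) :
    Martingale
      (fun n ω => ((X n ω : ℝ))^2 - n
        - 2 * (1 - c)/(1 + c) *
          ∑ k ∈ Finset.range n,
            |(X k ω : ℝ)| * (if X k ω = m k ω ∨ X k ω = M k ω then (1:ℝ) else 0))
      ℱ μ ∧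
    ∀ n, ∫ ω, (((X n ω : ℝ))^2 - n
        - 2 * (1 - c)/(1 + c) *
          ∑ k ∈ Finset.range n,
            |(X k ω : ℝ)| * (if X k ω = m k ω ∨ X k ω = M k ω then (1:ℝ) else 0)) ∂μ = 0 := by
  have h : IsORRW μ c X M m ℱ := ⟨hX0, hstep, hM, hm, hℱ, hcond⟩
  have hc' : 1 + c ≠ 0 := by positivity
  exact ⟨h.martingale_squareProcess hc', h.integral_squareProcess hc'⟩

/-- For the once-reinforced random walk `X` on `ℤ` with parameter `c > 0`
(characterized by its step distribution conditional on its past), the process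
`N_n = X_n^2 - n - 2((1-c)/(1+c)) Σ_{k<n} |X_k| 1_{X_k ∈ {m_k, M_k}}`
is a mean-zero martingale with respect to the natural filtration of `X`. -/
theorem orrw_square_martingale {Ω : Type*} [m0 : MeasurableSpace Ω]
    (μ : Measure Ω) [IsProbabilityMeasure μ]
    (c : ℝ) (hc : 0 < c)
    (X : ℕ → Ω → ℤ) (hmeas : ∀ n, Measurable (X n))
    (hX0 : ∀ ω, X 0 ω = 0)
    (hstep : ∀ n ω, X (n+1) ω = X n ω + 1 ∨ X (n+1) ω = X n ω - 1)
    (M : ℕ → Ω → ℤ)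
    (hM : ∀ n ω, M n ω = (Finset.range (n+1)).sup' Finset.nonempty_range_add_one
      (fun k => X k ω))
    (m : ℕ → Ω → ℤ)
    (hm : ∀ n ω, m n ω = (Finset.range (n+1)).inf' Finset.nonempty_range_add_one
      (fun k => X k ω))
    (ℱ : Filtration ℕ m0)
    (hℱ : ∀ n, ℱ n = ⨆ k ∈ Set.Iic n, MeasurableSpace.comap (X k) inferInstance)
    (hcond : ∀ n,
      (μ[Set.indicator {ω | X (n+1) ω = X n ω + 1} (fun _ => (1 : ℝ)) | ℱ n])
        =ᵐ[μ] fun ω =>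
          if X n ω = M n ω ∧ X n ω = m n ω then 1/2
          else if X n ω = M n ω then 1/(1+c)
          else if X n ω = m n ω then c/(1+c)
          else 1/2) :
    Martingale
      (fun n ω => ((X n ω : ℝ))^2 - n
        - 2 * (1 - c)/(1 + c) *
          ∑ k ∈ Finset.range n,
            |(X k ω : ℝ)| * (if X k ω = m k ω ∨ X k ω = M k ω then (1:ℝ) else 0))
      ℱ μ ∧
    ∀ n, ∫ ω, (((X n ω : ℝ))^2 - n
        - 2 * (1 - c)/(1 + c) *
          ∑ k ∈ Finset.range n,
            |(X k ω : ℝ)| * (if X k ω = m k ω ∨ X k ω = M k ω then (1:ℝ) else 0)) ∂μ = 0 :=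
  orrw_square_martingale_general (m0 := m0) μ c hc X hX0 hstep M hM m hm ℱ hℱ hcond
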